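/- arXiv:1709.04832 — 2 statements merged into one kernel-verified Lean document; each statement's English description precedes it below -/
import Mathlib

section
/- Let (L,∀) be a subdirectly irreducible strong monadic NM-algebra. Then for all x, y ∈ L, if x ∨ y = 1 then x = 1 or y = 1; consequently (using prelinearity) L is linearly ordered: for all x, y ∈ L, x ≤ y or y ≤ x. -/
/-- An NM-algebra: a bounded lattice with a commutative monoid operation `odot`
(unit `⊤`) and a residuated implication `imp`, satisfying prelinearity, the weak
nilpotent minimum identity and involution of the negation `nneg x = imp x ⊥`. -/
class NMAlgebra (L : Type*) extends Lattice L, BoundedOrder L where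
  odot : L → L → L
  imp : L → L → L
  odot_comm : ∀ x y : L, odot x y = odot y x
  odot_assoc : ∀ x y z : L, odot (odot x y) z = odot x (odot y z)
  odot_top : ∀ x : L, odot x ⊤ = x
  residuation : ∀ x y z : L, odot x y ≤ z ↔ x ≤ imp y z
  prelinearity : ∀ x y : L, imp x y ⊔ imp y x = ⊤
  wnm : ∀ x y : L, imp (odot x y) ⊥ ⊔ imp (x ⊓ y) (odot x y) = ⊤
  involution : ∀ x : L, imp (imp x ⊥) ⊥ = x

namespace NMAlgebra

variable {L : Type*} [NMAlgebra L]

/-- Negation `¬x := x → 0`. -/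
def nneg (x : L) : L := imp x ⊥

/-- `x ⊕ y := ¬x → y`. -/
def oplus (x y : L) : L := imp (nneg x) y

/-- `n`-fold `⊙`-power, with `opow a 0 = ⊤`. -/
def opow (a : L) : ℕ → L
  | 0 => ⊤
  | n + 1 => odot a (opow a n)

/-- A universal quantifier on an NM-algebra: (U1)–(U4). -/
def IsUQ (q : L → L) : Prop :=
  (∀ x : L, q x ≤ x) ∧
  (∀ x y : L, q (imp (nneg x) (q y)) = imp (nneg (q x)) (q y)) ∧
  (∀ x y : L, q (imp (q x) y) = imp (q x) (q y)) ∧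
  (∀ x y : L, q (x ⊔ q y) = q x ⊔ q y)

/-- A strong universal quantifier on an NM-algebra: (U1),(U2),(U3),(U4'). -/
def IsStrongUQ (q : L → L) : Prop :=
  (∀ x : L, q x ≤ x) ∧
  (∀ x y : L, q (imp (nneg x) (q y)) = imp (nneg (q x)) (q y)) ∧
  (∀ x y : L, q (imp (q x) y) = imp (q x) (q y)) ∧
  (∀ x y : L, q (x ⊔ y) = q x ⊔ q y)

/-- A filter of an NM-algebra: nonempty, closed under `⊙` and upward closed. -/
def IsNMFilter (F : Set L) : Prop :=
  F.Nonempty ∧ (∀ x ∈ F, ∀ y ∈ F, odot x y ∈ F) ∧ ∀ x ∈ F, ∀ y : L, x ≤ y → y ∈ F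

/-- A monadic filter of `(L, q)`: a filter closed under `q`. -/
def IsMonadicFilter (q : L → L) (F : Set L) : Prop :=
  IsNMFilter F ∧ ∀ x ∈ F, q x ∈ F

/-- The smallest monadic filter containing `X`. -/
def genMF (q : L → L) (X : Set L) : Set L :=
  ⋂₀ {F : Set L | IsMonadicFilter q F ∧ X ⊆ F}

/-- The smallest filter containing `X`. -/
def genF (X : Set L) : Set L :=
  ⋂₀ {F : Set L | IsNMFilter F ∧ X ⊆ F}

/-- A filter of the subalgebra carried by `S ⊆ L`: a nonempty subset of `S`
closed under `⊙` and upward closed within `S`. -/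
def IsFilterOn (S : Set L) (G : Set L) : Prop :=
  G ⊆ S ∧ G.Nonempty ∧ (∀ x ∈ G, ∀ y ∈ G, odot x y ∈ G) ∧
    ∀ x ∈ G, ∀ y ∈ S, x ≤ y → y ∈ G

/-- A prime monadic filter: a proper monadic filter `P` such that
`F₁ ∩ F₂ ⊆ P` implies `F₁ ⊆ P` or `F₂ ⊆ P` for monadic filters `F₁, F₂`. -/
def IsPrimeMF (q : L → L) (P : Set L) : Prop :=
  IsMonadicFilter q P ∧ P ≠ Set.univ ∧
    ∀ F₁ F₂ : Set L, IsMonadicFilter q F₁ → IsMonadicFilter q F₂ →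
      F₁ ∩ F₂ ⊆ P → F₁ ⊆ P ∨ F₂ ⊆ P

/-- A prime filter: a proper filter `P` with `x ⊔ y ∈ P → x ∈ P ∨ y ∈ P`. -/
def IsPrimeF (P : Set L) : Prop :=
  IsNMFilter P ∧ P ≠ Set.univ ∧ ∀ x y : L, x ⊔ y ∈ P → x ∈ P ∨ y ∈ P

/-- A monadic congruence on `(L, q)`: an equivalence relation compatible with
`⊓`, `⊔`, `⊙`, `→` and with `q`. -/
def IsMonadicCong (q : L → L) (θ : L → L → Prop) : Prop :=
  Equivalence θ ∧
  (∀ a b c d : L, θ a b → θ c d → θ (a ⊓ c) (b ⊓ d)) ∧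
  (∀ a b c d : L, θ a b → θ c d → θ (a ⊔ c) (b ⊔ d)) ∧
  (∀ a b c d : L, θ a b → θ c d → θ (odot a c) (odot b d)) ∧
  (∀ a b c d : L, θ a b → θ c d → θ (imp a c) (imp b d)) ∧
  ∀ a b : L, θ a b → θ (q a) (q b)

end NMAlgebra

open NMAlgebra

/-!
If `x ⊔ y = ⊤` with `x, y ≠ ⊤`, the monadic filters generated by `∀x` and `∀y` are nontrivial
(they contain `x` and `y`). Since `∀x ⊔ ∀y = ∀(x ⊔ y) = ⊤`, and `a ⊔ b = ⊤` forces
`aᵐ ⊔ bⁿ = ⊤` in any residuated lattice, the two filters meet only in `⊤`, contradicting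
subdirect irreducibility. Linearity then follows from prelinearity.
-/

namespace NMAlgebra

variable {L : Type*} [NMAlgebra L]

lemma top_odot (x : L) : odot ⊤ x = x := by rw [odot_comm, odot_top]

lemma imp_eq_top_iff {x y : L} : imp x y = ⊤ ↔ x ≤ y := by
  rw [eq_top_iff, ← residuation, top_odot]

lemma odot_le_odot_left {a b : L} (h : a ≤ b) (c : L) : odot a c ≤ odot b c :=
  (residuation _ _ _).mpr (h.trans ((residuation _ _ _).mp le_rfl))

lemma odot_le_odot_right (c : L) {a b : L} (h : a ≤ b) : odot c a ≤ odot c b := by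
  rw [odot_comm c a, odot_comm c b]
  exact odot_le_odot_left h c

lemma odot_le_odot {a b c d : L} (hab : a ≤ b) (hcd : c ≤ d) : odot a c ≤ odot b d :=
  (odot_le_odot_left hab c).trans (odot_le_odot_right b hcd)

lemma odot_le_left (a b : L) : odot a b ≤ a :=
  (odot_le_odot_right a le_top).trans (odot_top a).le

lemma odot_le_right (a b : L) : odot a b ≤ b := odot_comm a b ▸ odot_le_left b a

lemma odot_sup (a b c : L) : odot a (b ⊔ c) = odot a b ⊔ odot a c := by
  refine le_antisymm ?_ (sup_le (odot_le_odot_right a le_sup_left)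
    (odot_le_odot_right a le_sup_right))
  rw [odot_comm, residuation]
  refine sup_le ?_ ?_ <;> rw [← residuation, odot_comm]
  exacts [le_sup_left, le_sup_right]

lemma imp_odot (x y z : L) : imp (odot x y) z = imp x (imp y z) :=
  le_antisymm_iff.mpr ⟨by rw [← residuation, ← residuation, odot_assoc, residuation],
    by rw [← residuation, ← odot_assoc, residuation, residuation]⟩

lemma odot_eq_nneg_imp_nneg (x y : L) : odot x y = nneg (imp x (nneg y)) := by
  rw [nneg, nneg, ← imp_odot, involution]

lemma odot_sup_eq_top {x y z : L} (hx : x ⊔ z = ⊤) (hy : y ⊔ z = ⊤) :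
    odot x y ⊔ z = ⊤ := by
  refine top_le_iff.mp ?_
  calc (⊤ : L) = odot (x ⊔ z) (y ⊔ z) := by rw [hx, hy, odot_top]
    _ = (odot x y ⊔ odot x z) ⊔ odot z (y ⊔ z) := by
      rw [odot_comm (x ⊔ z), odot_sup, odot_comm (y ⊔ z) x, odot_comm (y ⊔ z) z, odot_sup]
    _ ≤ odot x y ⊔ z :=
      sup_le (sup_le_sup_left (odot_le_right x z) _) (le_sup_of_le_right (odot_le_left z _))

lemma opow_sup_eq_top {a z : L} (h : a ⊔ z = ⊤) : ∀ n, opow a n ⊔ z = ⊤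
  | 0 => top_sup_eq z
  | n + 1 => odot_sup_eq_top h (opow_sup_eq_top h n)

lemma opow_sup_opow_eq_top {a b : L} (h : a ⊔ b = ⊤) (m n : ℕ) :
    opow a m ⊔ opow b n = ⊤ := by
  have hb : a ⊔ opow b n = ⊤ := by
    rw [sup_comm]
    exact opow_sup_eq_top (by rwa [sup_comm]) n
  exact opow_sup_eq_top hb m

lemma opow_add (a : L) (m n : ℕ) : opow a (m + n) = odot (opow a m) (opow a n) := by
  induction m with
  | zero => rw [Nat.zero_add, opow, top_odot]
  | succ k ih => rw [Nat.succ_add, opow, opow, ih, odot_assoc]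

lemma opow_one (a : L) : opow a 1 = a := odot_top a

lemma top_mem_of_isNMFilter {F : Set L} (hF : IsNMFilter F) : ⊤ ∈ F :=
  let ⟨⟨w, hw⟩, _, hup⟩ := hF
  hup w hw ⊤ le_top

def powFilter (a : L) : Set L := {z | ∃ n, opow a n ≤ z}

lemma isNMFilter_powFilter (a : L) : IsNMFilter (powFilter a) := by
  refine ⟨⟨⊤, 0, le_top⟩, ?_, fun x ⟨n, hn⟩ y hxy => ⟨n, hn.trans hxy⟩⟩
  rintro x ⟨m, hm⟩ y ⟨n, hn⟩
  exact ⟨m + n, by rw [opow_add]; exact odot_le_odot hm hn⟩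

lemma powFilter_inter_powFilter_subset {a b : L} (h : a ⊔ b = ⊤) :
    powFilter a ∩ powFilter b ⊆ {⊤} := by
  rintro z ⟨⟨m, hm⟩, ⟨n, hn⟩⟩
  exact top_le_iff.mp (opow_sup_opow_eq_top h m n ▸ sup_le hm hn)

namespace IsStrongUQ

variable {q : L → L} (hq : IsStrongUQ q)
include hq

lemma map_le (x : L) : q x ≤ x := hq.1 x

lemma map_imp_map (x y : L) : q (imp (q x) y) = imp (q x) (q y) := hq.2.2.1 x y

lemma map_sup (x y : L) : q (x ⊔ y) = q x ⊔ q y := hq.2.2.2 x y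

lemma map_top : q ⊤ = ⊤ := by
  have h := hq.map_imp_map ⊤ ⊤
  rwa [imp_eq_top_iff.mpr le_top, imp_eq_top_iff.mpr le_rfl] at h

lemma map_bot : q ⊥ = ⊥ := le_bot_iff.mp (hq.map_le ⊥)

lemma monotone : Monotone q := fun x y hxy => by
  rw [← sup_eq_right.mpr hxy, hq.map_sup]
  exact le_sup_left

lemma map_nneg_map (x : L) : q (nneg (q x)) = nneg (q x) := by
  rw [nneg, hq.map_imp_map, hq.map_bot]

lemma map_odot_map (x y : L) : q (odot (q x) (q y)) = odot (q x) (q y) := by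
  have hfix : imp (q x) (nneg (q y)) = q (imp (q x) (nneg (q y))) := by
    rw [hq.map_imp_map, hq.map_nneg_map]
  rw [odot_eq_nneg_imp_nneg, hfix, hq.map_nneg_map]

lemma map_opow_map (a : L) (n : ℕ) : q (opow (q a) n) = opow (q a) n := by
  induction n with
  | zero => exact hq.map_top
  | succ n ih => rw [opow, ← ih, hq.map_odot_map]

lemma isMonadicFilter_powFilter (a : L) : IsMonadicFilter q (powFilter (q a)) :=
  ⟨isNMFilter_powFilter (q a), fun _ ⟨n, hn⟩ => ⟨n, hq.map_opow_map a n ▸ hq.monotone hn⟩⟩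

lemma mem_powFilter_map (a : L) : a ∈ powFilter (q a) := ⟨1, by rw [opow_one]; exact hq.map_le a⟩

end IsStrongUQ

end NMAlgebra

/-- Proposition 4.27 and Theorem 4.28: a subdirectly irreducible strong monadic
NM-algebra satisfies `x ⊔ y = 1 → x = 1 ∨ y = 1` and is linearly ordered. -/
theorem strong_monadic_nm_subdirectly_irreducible_linear
    {L : Type*} [NMAlgebra L] (q : L → L) (hq : IsStrongUQ q)
    (hsi : ⋂₀ {F : Set L | IsMonadicFilter q F ∧ F ≠ {(⊤ : L)}} ≠ {(⊤ : L)}) :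
    (∀ x y : L, x ⊔ y = ⊤ → x = ⊤ ∨ y = ⊤) ∧
    (∀ x y : L, x ≤ y ∨ y ≤ x) := by
  have sup_eq_top : ∀ x y : L, x ⊔ y = ⊤ → x = ⊤ ∨ y = ⊤ := by
    intro x y hxy
    by_contra! hne
    have nontrivial : ∀ z : L, z ≠ ⊤ →
        powFilter (q z) ∈ {F : Set L | IsMonadicFilter q F ∧ F ≠ {(⊤ : L)}} :=
      fun z hz => ⟨hq.isMonadicFilter_powFilter z,
        fun h => hz (Set.mem_singleton_iff.mp (h ▸ hq.mem_powFilter_map z))⟩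
    refine hsi (Set.Subset.antisymm ?_ ?_)
    · calc _ ⊆ powFilter (q x) ∩ powFilter (q y) :=
            Set.subset_inter (Set.sInter_subset_of_mem (nontrivial x hne.1))
              (Set.sInter_subset_of_mem (nontrivial y hne.2))
        _ ⊆ {⊤} := powFilter_inter_powFilter_subset (by rw [← hq.map_sup, hxy, hq.map_top])
    · rintro _ rfl
      exact Set.mem_sInter.mpr fun F hF => top_mem_of_isNMFilter hF.1.1
  refine ⟨sup_eq_top, fun x y => ?_⟩
  rcases sup_eq_top _ _ (prelinearity x y) with h | h
  exacts [Or.inl (imp_eq_top_iff.mp h), Or.inr (imp_eq_top_iff.mp h)]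
end

section
/- Let (L,∀) be a monadic NM-algebra. Then (L,∀) is subdirectly irreducible if and only if the NM-algebra L_∀ = {x ∈ L | ∀x = x} is subdirectly irreducible, i.e. among the filters of L_∀ different from {1} there exists a least one. -/
open NMAlgebra

section Helpers

variable {L : Type*} [NMAlgebra L]

lemma nm_le_iff_imp_top (x y : L) : x ≤ y ↔ imp x y = ⊤ := by
  constructor
  · intro h
    apply le_antisymm le_top
    rw [← residuation, odot_comm, odot_top]
    exact h
  · intro h
    have : (⊤ : L) ≤ imp x y := h.ge
    rw [← residuation, odot_comm, odot_top] at this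
    exact this

lemma nm_imp_top (x : L) : imp x (⊤ : L) = ⊤ := (nm_le_iff_imp_top x ⊤).mp le_top

lemma nm_imp_self (x : L) : imp x x = ⊤ := (nm_le_iff_imp_top x x).mp le_rfl

lemma nm_odot_mono {a b c d : L} (h1 : a ≤ b) (h2 : c ≤ d) :
    odot a c ≤ odot b d := by
  have hb : b ≤ imp d (odot b d) := (residuation b d (odot b d)).mp le_rfl
  have ha : a ≤ imp d (odot b d) := le_trans h1 hb
  have h3 : odot a d ≤ odot b d := (residuation a d (odot b d)).mpr ha
  have hd : d ≤ imp a (odot a d) := by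
    rw [← residuation, odot_comm]
  have hc : c ≤ imp a (odot a d) := le_trans h2 hd
  have h4 : odot c a ≤ odot a d := (residuation c a (odot a d)).mpr hc
  calc odot a c = odot c a := odot_comm a c
  _ ≤ odot a d := h4
  _ ≤ odot b d := h3

lemma nm_curry (x y z : L) : imp (odot x y) z = imp x (imp y z) := by
  apply le_antisymm
  · rw [← residuation, ← residuation, odot_assoc]
    rw [residuation]
  · rw [← residuation, ← odot_assoc, residuation, residuation]

lemma nm_q_top {q : L → L} (hq : IsUQ q) : q ⊤ = ⊤ := by
  obtain ⟨h1, _, h3, _⟩ := hq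
  have := h3 ⊤ ⊤
  rw [nm_imp_top] at this
  have h' : imp (q ⊤) (q ⊤) = ⊤ := nm_imp_self _
  rw [h'] at this
  exact this

lemma nm_q_bot {q : L → L} (hq : IsUQ q) : q ⊥ = ⊥ := le_antisymm (hq.1 ⊥) bot_le

lemma nm_q_mono {q : L → L} (hq : IsUQ q) {x y : L} (h : x ≤ y) : q x ≤ q y := by
  have hxy : imp (q x) y = ⊤ := (nm_le_iff_imp_top _ _).mp (le_trans (hq.1 x) h)
  have := hq.2.2.1 x y
  rw [hxy, nm_q_top hq] at this
  exact (nm_le_iff_imp_top _ _).mpr this.symm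

lemma nm_q_idem {q : L → L} (hq : IsUQ q) (x : L) : q (q x) = q x := by
  have h4 := hq.2.2.2 ⊥ x
  rw [bot_sup_eq, nm_q_bot hq, bot_sup_eq] at h4
  exact h4

lemma nm_q_fix_imp {q : L → L} (hq : IsUQ q) {x y : L} (hx : q x = x) (hy : q y = y) :
    q (imp x y) = imp x y := by
  have := hq.2.2.1 x y
  rw [hx, hy] at this
  exact this

lemma nm_odot_eq_nneg (x y : L) : odot x y = imp (imp x (imp y ⊥)) ⊥ := by
  rw [← nm_curry, involution]

lemma nm_q_fix_odot {q : L → L} (hq : IsUQ q) {x y : L} (hx : q x = x) (hy : q y = y) :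
    q (odot x y) = odot x y := by
  have hbot : q (⊥ : L) = ⊥ := nm_q_bot hq
  have h1 : q (imp y ⊥) = imp y ⊥ := nm_q_fix_imp hq hy hbot
  have h2 : q (imp x (imp y ⊥)) = imp x (imp y ⊥) := nm_q_fix_imp hq hx h1
  have h3 := nm_q_fix_imp hq h2 hbot
  rw [nm_odot_eq_nneg]
  exact h3

/-- The upward closure of a filter `G` on the fixed-point set is a monadic filter. -/
lemma nm_up_monadic {q : L → L} (hq : IsUQ q) {G : Set L}
    (hG : IsFilterOn {x : L | q x = x} G) :
    IsMonadicFilter q {x : L | ∃ g ∈ G, g ≤ x} := by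
  obtain ⟨hsub, hne, hodot, hup⟩ := hG
  refine ⟨⟨?_, ?_, ?_⟩, ?_⟩
  · obtain ⟨g, hg⟩ := hne
    exact ⟨g, g, hg, le_rfl⟩
  · rintro x ⟨g1, hg1, hle1⟩ y ⟨g2, hg2, hle2⟩
    exact ⟨odot g1 g2, hodot g1 hg1 g2 hg2, nm_odot_mono hle1 hle2⟩
  · rintro x ⟨g, hg, hle⟩ y hxy
    exact ⟨g, hg, le_trans hle hxy⟩
  · rintro x ⟨g, hg, hle⟩
    refine ⟨g, hg, ?_⟩
    have : q g ≤ q x := nm_q_mono hq hle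
    rwa [hsub hg] at this
  
/-- Intersecting a monadic filter with the fixed points gives a filter on them. -/
lemma nm_inter_filter {q : L → L} (hq : IsUQ q) {F : Set L}
    (hF : IsMonadicFilter q F) :
    IsFilterOn {x : L | q x = x} (F ∩ {x : L | q x = x}) := by
  obtain ⟨⟨hne, hodot, hup⟩, hqc⟩ := hF
  have htop : (⊤ : L) ∈ F := by
    obtain ⟨a, ha⟩ := hne
    exact hup a ha ⊤ le_top
  refine ⟨Set.inter_subset_right, ⟨⊤, htop, nm_q_top hq⟩, ?_, ?_⟩
  · rintro x ⟨hx, hx'⟩ y ⟨hy, hy'⟩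
    exact ⟨hodot x hx y hy, nm_q_fix_odot hq hx' hy'⟩
  · rintro x ⟨hx, _⟩ y hy hxy
    exact ⟨hup x hx y hxy, hy⟩

lemma nm_inter_nontrivial {q : L → L} (hq : IsUQ q) {F : Set L}
    (hF : IsMonadicFilter q F) (hFne : F ≠ {(⊤ : L)}) :
    F ∩ {x : L | q x = x} ≠ {(⊤ : L)} := by
  obtain ⟨⟨hne, hodot, hup⟩, hqc⟩ := hF
  have htop : (⊤ : L) ∈ F := by
    obtain ⟨a, ha⟩ := hne
    exact hup a ha ⊤ le_top
  obtain ⟨a, ha, hane⟩ : ∃ a ∈ F, a ≠ ⊤ := by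
    by_contra h
    push_neg at h
    exact hFne (Set.eq_singleton_iff_unique_mem.mpr ⟨htop, h⟩)
  intro heq
  have hqa : q a ∈ F ∩ {x : L | q x = x} := ⟨hqc a ha, nm_q_idem hq a⟩
  rw [heq] at hqa
  have : q a = ⊤ := hqa
  exact hane (le_antisymm le_top (this ▸ hq.1 a))

lemma nm_up_nontrivial {q : L → L} (hq : IsUQ q) {G : Set L}
    (hG : IsFilterOn {x : L | q x = x} G) (hGne : G ≠ {(⊤ : L)}) :
    {x : L | ∃ g ∈ G, g ≤ x} ≠ {(⊤ : L)} := by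
  obtain ⟨hsub, hne, hodot, hup⟩ := hG
  have htop : (⊤ : L) ∈ G := by
    obtain ⟨g, hg⟩ := hne
    exact hup g hg ⊤ (nm_q_top hq) le_top
  obtain ⟨g, hg, hgne⟩ : ∃ g ∈ G, g ≠ ⊤ := by
    by_contra h
    push_neg at h
    exact hGne (Set.eq_singleton_iff_unique_mem.mpr ⟨htop, h⟩)
  intro heq
  have : g ∈ {x : L | ∃ g ∈ G, g ≤ x} := ⟨g, hg, le_rfl⟩
  rw [heq] at this
  exact hgne this

lemma nm_up_inter {q : L → L} {G : Set L}
    (hG : IsFilterOn {x : L | q x = x} G) :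
    {x : L | ∃ g ∈ G, g ≤ x} ∩ {x : L | q x = x} = G := by
  obtain ⟨hsub, hne, hodot, hup⟩ := hG
  ext x
  constructor
  · rintro ⟨⟨g, hg, hle⟩, hx⟩
    exact hup g hg x hx hle
  · intro hx
    exact ⟨⟨x, hx, le_rfl⟩, hsub hx⟩

end Helpers

/-- Theorem 4.30: `(L,∀)` is subdirectly irreducible iff the NM-algebra `L_∀`
is subdirectly irreducible. -/
theorem monadic_nm_subdirectly_irreducible_iff_fixedpoints
    {L : Type*} [NMAlgebra L] (q : L → L) (hq : IsUQ q) :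
    (∃ F : Set L, IsMonadicFilter q F ∧ F ≠ {(⊤ : L)} ∧
      ∀ G : Set L, IsMonadicFilter q G → G ≠ {(⊤ : L)} → F ⊆ G) ↔
    (∃ F : Set L, IsFilterOn {x : L | q x = x} F ∧ F ≠ {(⊤ : L)} ∧
      ∀ G : Set L, IsFilterOn {x : L | q x = x} G → G ≠ {(⊤ : L)} → F ⊆ G) := by
  constructor
  · rintro ⟨F, hF, hFne, hFleast⟩
    refine ⟨F ∩ {x : L | q x = x}, nm_inter_filter hq hF, nm_inter_nontrivial hq hF hFne, ?_⟩
    intro G hG hGne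
    have hupG : IsMonadicFilter q {x : L | ∃ g ∈ G, g ≤ x} := nm_up_monadic hq hG
    have hsubF : F ⊆ {x : L | ∃ g ∈ G, g ≤ x} :=
      hFleast _ hupG (nm_up_nontrivial hq hG hGne)
    intro x hx
    have : x ∈ {x : L | ∃ g ∈ G, g ≤ x} ∩ {x : L | q x = x} := ⟨hsubF hx.1, hx.2⟩
    rwa [nm_up_inter hG] at this
  · rintro ⟨G, hG, hGne, hGleast⟩
    refine ⟨{x : L | ∃ g ∈ G, g ≤ x}, nm_up_monadic hq hG, nm_up_nontrivial hq hG hGne, ?_⟩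
    intro F hF hFne
    have hsubG : G ⊆ F ∩ {x : L | q x = x} :=
      hGleast _ (nm_inter_filter hq hF) (nm_inter_nontrivial hq hF hFne)
    rintro x ⟨g, hg, hle⟩
    exact hF.1.2.2 g (hsubG hg).1 x hle
end
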